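/- For any graph G, for any optimal HC tree T* of G and any partition {P_i}_{i=1}^{ℓ} of the vertex set, OPT_G ≥ Σ_{i=1}^{ℓ} OPT_{G[P_i]}, where OPT_{G[P_i]} is the minimum Dasgupta cost of an HC tree of the induced subgraph G[P_i]. -/

import Mathlib

open Finset

/-- A hierarchical clustering (HC) tree: a binary tree with vertex-labelled leaves. -/
inductive HCTree (V : Type) where
  | leaf (v : V) : HCTree V
  | node (l r : HCTree V) : HCTree V

namespace HCTree

variable {V : Type} [Fintype V] [DecidableEq V]

/-- The list of leaf labels of an HC tree. -/
def leafList : HCTree V → List V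
  | leaf v => [v]
  | node l r => leafList l ++ leafList r

/-- The set of leaves of an HC tree. -/
def leaves (t : HCTree V) : Finset V := t.leafList.toFinset

/-- Total weight of (ordered) pairs between two vertex sets:
`w(S,T) = ∑_{u ∈ S, v ∈ T} w(u,v)`. -/
def cut (w : V → V → ℝ) (S T : Finset V) : ℝ := ∑ u ∈ S, ∑ v ∈ T, w u v

/-- The (weighted) degree of a vertex: `d_u = ∑_v w(u,v)`. -/
def deg (w : V → V → ℝ) (u : V) : ℝ := ∑ v, w u v

/-- The volume of a vertex set: `vol(S) = ∑_{u ∈ S} d_u`. -/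
def vol (w : V → V → ℝ) (S : Finset V) : ℝ := ∑ u ∈ S, deg w u

/-- Dasgupta's cost of an HC tree, via the equivalent internal-node formula:
`cost(T) = ∑_{N → (N₁,N₂)} |leaves(T[N])| · w(leaves(N₁), leaves(N₂))`. -/
def cost (w : V → V → ℝ) : HCTree V → ℝ
  | leaf _ => 0
  | node l r =>
      ((leaves (node l r)).card : ℝ) * cut w (leaves l) (leaves r)
        + cost w l + cost w r

/-- `t` is an HC tree of the graph on vertex set `V`: its leaves are distinct
and are exactly the vertices of `V`. -/
def isHC (t : HCTree V) : Prop := t.leafList.Nodup ∧ t.leaves = Finset.univ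

end HCTree

namespace HCTree

variable {V : Type} [Fintype V] [DecidableEq V]

/-- The weight function of the induced subgraph `G[P]`. -/
def inducedW (w : V → V → ℝ) (P : Finset V) : V → V → ℝ :=
  fun u v => if u ∈ P ∧ v ∈ P then w u v else 0

/-- `t` is an HC tree of the induced subgraph `G[P]`: its leaves are distinct and are
exactly the vertices of `P`. -/
def isHCon (t : HCTree V) (P : Finset V) : Prop :=
  t.leafList.Nodup ∧ t.leaves = P

end HCTree
/-!
Restricting `T*` to the leaves of a block `P` (contracting the nodes left with one child) gives
an HC tree of `G[P]`. For nonnegative weights this does not increase the cost, since every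
internal node only loses leaves; in particular `OPT_{G[P]} ≤ cost_{w|P}(T*)`. The cost is linear
in the weights, and the induced weights of disjoint blocks sum to at most `w`, so summing over the
blocks gives `∑ OPT_{G[P_i]} ≤ cost_w(T*)`.
-/

namespace HCTree

section Cut

variable {V : Type}

lemma cut_nonneg {w : V → V → ℝ} (hw : ∀ u v, 0 ≤ w u v) (S T : Finset V) :
    0 ≤ cut w S T :=
  sum_nonneg fun u _ => sum_nonneg fun v _ => hw u v

lemma cut_mono_weight {w w' : V → V → ℝ} (hww' : ∀ u v, w u v ≤ w' u v) (S T : Finset V) :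
    cut w S T ≤ cut w' S T :=
  sum_le_sum fun u _ => sum_le_sum fun v _ => hww' u v

lemma cut_mono_sets {w : V → V → ℝ} (hw : ∀ u v, 0 ≤ w u v) {S S' T T' : Finset V}
    (hS : S ⊆ S') (hT : T ⊆ T') : cut w S T ≤ cut w S' T' :=
  calc cut w S T ≤ ∑ u ∈ S, ∑ v ∈ T', w u v :=
        sum_le_sum fun u _ => sum_le_sum_of_subset_of_nonneg hT fun v _ _ => hw u v
    _ ≤ cut w S' T' :=
        sum_le_sum_of_subset_of_nonneg hS fun u _ _ => sum_nonneg fun v _ => hw u v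

lemma cut_sum {ι : Type*} (s : Finset ι) (f : ι → V → V → ℝ) (S T : Finset V) :
    cut (∑ i ∈ s, f i) S T = ∑ i ∈ s, cut (f i) S T := by
  simp only [cut, Finset.sum_apply]
  exact sum_comm_cycle

end Cut

variable {V : Type} [DecidableEq V]

lemma leaves_node (l r : HCTree V) : leaves (node l r) = leaves l ∪ leaves r := by
  simp [leaves, leafList]

lemma leaves_nonempty (t : HCTree V) : t.leaves.Nonempty := by
  induction t with
  | leaf v => exact ⟨v, by simp [leaves, leafList]⟩
  | node l r ihl _ => exact leaves_node l r ▸ ihl.mono subset_union_left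

lemma cost_mono_weight {w w' : V → V → ℝ} (hww' : ∀ u v, w u v ≤ w' u v) (t : HCTree V) :
    cost w t ≤ cost w' t := by
  induction t with
  | leaf v => exact le_rfl
  | node l r ihl ihr =>
      have := cut_mono_weight hww' (leaves l) (leaves r)
      simp only [cost]
      gcongr

lemma cost_sum {ι : Type*} (s : Finset ι) (f : ι → V → V → ℝ) (t : HCTree V) :
    cost (∑ i ∈ s, f i) t = ∑ i ∈ s, cost (f i) t := by
  induction t with
  | leaf v => simp [cost]
  | node l r ihl ihr => simp only [cost, ihl, ihr, cut_sum, mul_sum, sum_add_distrib]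

lemma inducedW_nonneg {w : V → V → ℝ} (hw : ∀ u v, 0 ≤ w u v) (P : Finset V) (u v : V) :
    0 ≤ inducedW w P u v := by
  unfold inducedW
  split_ifs
  exacts [hw u v, le_rfl]

lemma inducedW_le {w : V → V → ℝ} (hw : ∀ u v, 0 ≤ w u v) (P : Finset V) (u v : V) :
    inducedW w P u v ≤ w u v := by
  unfold inducedW
  split_ifs
  exacts [le_rfl, hw u v]

lemma sum_inducedW_le {ι : Type*} (s : Finset ι) {w : V → V → ℝ} (hw : ∀ u v, 0 ≤ w u v)
    {P : ι → Finset V} (hP : Set.PairwiseDisjoint ↑s P) (u v : V) :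
    (∑ i ∈ s, inducedW w (P i)) u v ≤ w u v := by
  rw [Finset.sum_apply, Finset.sum_apply]
  by_cases hu : ∃ i ∈ s, u ∈ P i
  · obtain ⟨i, hi, hui⟩ := hu
    rw [sum_eq_single_of_mem i hi fun j hj hji => ?_]
    · exact inducedW_le hw (P i) u v
    · have huj : u ∉ P j := disjoint_left.1 (hP hi hj hji.symm) hui
      simp [inducedW, huj]
  · push Not at hu
    rw [sum_eq_zero fun i hi => by simp [inducedW, hu i hi]]
    exact hw u v

/-- The subtree spanned by the leaves in `P`, with internal nodes of degree one contracted;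
`none` when no leaf lies in `P`. -/
def restrict (P : Finset V) : HCTree V → Option (HCTree V)
  | leaf v => if v ∈ P then some (leaf v) else none
  | node l r =>
    match restrict P l, restrict P r with
    | none, none => none
    | some l', none => some l'
    | none, some r' => some r'
    | some l', some r' => some (node l' r')

lemma restrict_leafList (P : Finset V) (t : HCTree V) :
    (restrict P t).elim [] leafList = t.leafList.filter (· ∈ P) := by
  induction t with
  | leaf v =>
      simp only [restrict, leafList]
      split_ifs <;> simp_all [leafList]
  | node l r ihl ihr =>
      simp only [restrict, leafList, List.filter_append, ← ihl, ← ihr]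
      rcases restrict P l with _ | l' <;> rcases restrict P r with _ | r' <;> simp [leafList]

lemma leaves_restrict {P : Finset V} {t t' : HCTree V} (h : restrict P t = some t') :
    t'.leaves = t.leaves.filter (· ∈ P) := by
  have := restrict_leafList P t
  rw [h, Option.elim_some] at this
  simp [leaves, this, List.toFinset_filter]

lemma cost_restrict_le {w : V → V → ℝ} (hw : ∀ u v, 0 ≤ w u v) (P : Finset V)
    (t : HCTree V) : (restrict P t).elim 0 (cost w) ≤ cost w t := by
  induction t with
  | leaf v =>
      simp only [restrict]
      split_ifs <;> simp [cost]
  | node l r ihl ihr =>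
      have hnode : 0 ≤ ((leaves (node l r)).card : ℝ) * cut w (leaves l) (leaves r) :=
        mul_nonneg (Nat.cast_nonneg _) (cut_nonneg hw _ _)
      simp only [restrict, cost]
      rcases hl : restrict P l with _ | l' <;> rcases hr : restrict P r with _ | r' <;>
        simp only [hl, hr, Option.elim] at ihl ihr ⊢
      · linarith
      · linarith
      · linarith
      · have hl' := leaves_restrict hl
        have hr' := leaves_restrict hr
        have hsub : leaves (node l' r') ⊆ leaves (node l r) := by
          rw [leaves_node, leaves_node, hl', hr']
          exact union_subset_union (filter_subset _ _) (filter_subset _ _)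
        have : ((leaves (node l' r')).card : ℝ) * cut w (leaves l') (leaves r')
            ≤ ((leaves (node l r)).card : ℝ) * cut w (leaves l) (leaves r) := by
          refine mul_le_mul (by exact_mod_cast card_le_card hsub) ?_ (cut_nonneg hw _ _)
            (Nat.cast_nonneg _)
          exact cut_mono_sets hw (hl' ▸ filter_subset _ _) (hr' ▸ filter_subset _ _)
        rw [cost]
        linarith

lemma exists_restrict_isHCon [Fintype V] {t : HCTree V} (ht : isHC t) {P : Finset V}
    (hP : P.Nonempty) : ∃ t', restrict P t = some t' ∧ isHCon t' P := by
  have hfilter := restrict_leafList P t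
  rcases h : restrict P t with _ | t'
  · obtain ⟨v, hv⟩ := hP
    have hvt : v ∈ t.leaves := ht.2 ▸ mem_univ v
    rw [leaves, List.mem_toFinset] at hvt
    rw [h] at hfilter
    simpa [Option.elim, hvt, hv] using congrArg (v ∈ ·) hfilter
  · refine ⟨t', rfl, ?_, ?_⟩
    · rw [h, Option.elim_some] at hfilter
      rw [hfilter]
      exact ht.1.filter _
    · simp [leaves_restrict h, ht.2]

end HCTree

open HCTree in
theorem sum_opt_induced_le_opt_general {V : Type} [Fintype V] [DecidableEq V]
    (w : V → V → ℝ) (hw : ∀ u v, 0 ≤ w u v)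
    (ℓ : ℕ) (P : Fin ℓ → Finset V)
    (hpart : ∀ v : V, ∃! i : Fin ℓ, v ∈ P i)
    (Tstar : HCTree V) (hTstar : isHC Tstar)
    (T : Fin ℓ → HCTree V) (hT : ∀ i, isHCon (T i) (P i))
    (hToptimal : ∀ i, ∀ t : HCTree V, isHCon t (P i) →
      cost (inducedW w (P i)) (T i) ≤ cost (inducedW w (P i)) t) :
    ∑ i : Fin ℓ, cost (inducedW w (P i)) (T i) ≤ cost w Tstar := by
  have hdisj : Set.PairwiseDisjoint ↑(univ : Finset (Fin ℓ)) P := fun i _ j _ hij =>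
    disjoint_left.2 fun v hvi hvj => hij ((hpart v).unique hvi hvj)
  calc ∑ i, cost (inducedW w (P i)) (T i) ≤ ∑ i, cost (inducedW w (P i)) Tstar := by
        gcongr with i
        obtain ⟨t, hrestrict, ht⟩ :=
          exists_restrict_isHCon hTstar ((hT i).2 ▸ leaves_nonempty (T i))
        calc cost (inducedW w (P i)) (T i) ≤ cost (inducedW w (P i)) t := hToptimal i t ht
          _ ≤ cost (inducedW w (P i)) Tstar := by
            simpa [hrestrict] using cost_restrict_le (inducedW_nonneg hw (P i)) (P i) Tstar
    _ = cost (∑ i, inducedW w (P i)) Tstar := (cost_sum _ _ _).symm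
    _ ≤ cost w Tstar := cost_mono_weight (sum_inducedW_le _ hw hdisj) Tstar

open HCTree in
/-- For any graph `G`, any optimal HC tree `T*` of `G` and any partition
`{P_i}_{i=1}^ℓ` of the vertex set, `OPT_G ≥ ∑_{i=1}^{ℓ} OPT_{G[P_i]}`: if `T_i` is an
optimal HC tree of the induced subgraph `G[P_i]` for each `i`, then
`∑_i cost_{G[P_i]}(T_i) ≤ cost_G(T*)`. -/
theorem sum_opt_induced_le_opt {V : Type} [Fintype V] [DecidableEq V]
    (w : V → V → ℝ) (hw : ∀ u v, 0 ≤ w u v) (hsymm : ∀ u v, w u v = w v u)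
    (ℓ : ℕ) (P : Fin ℓ → Finset V)
    (hpart : ∀ v : V, ∃! i : Fin ℓ, v ∈ P i)
    (Tstar : HCTree V) (hTstar : isHC Tstar)
    (hopt : ∀ t : HCTree V, isHC t → cost w Tstar ≤ cost w t)
    (T : Fin ℓ → HCTree V) (hT : ∀ i, isHCon (T i) (P i))
    (hToptimal : ∀ i, ∀ t : HCTree V, isHCon t (P i) →
      cost (inducedW w (P i)) (T i) ≤ cost (inducedW w (P i)) t) :
    ∑ i : Fin ℓ, cost (inducedW w (P i)) (T i) ≤ cost w Tstar :=
  sum_opt_induced_le_opt_general w hw ℓ P hpart Tstar hTstar T hT hToptimal
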